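/- arXiv:math/0510519 — 8 statements merged into one kernel-verified Lean document; each statement's English description precedes it below -/
import Mathlib

section
/- Let H : (0,∞) → ℝ be twice differentiable with lim_{t→∞} t·H''(t) = ∞. Then for every real α > 1, lim_{t→∞} (H(αt) − α·H(t))/t = ∞. -/
/-!
Put `G t = H (α t) - α H t`, so `G' t = α (H' (α t) - H' t)`. By the mean value theorem,
`H' (α t) - H' t = (α - 1) t H'' c` for some `c ∈ (t, α t)`, and `t H'' c ≥ c H'' c / α → ∞`;
hence `G' → ∞`, and a function whose derivative tends to infinity grows superlinearly.
-/

open Filter Set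

theorem tendsto_div_atTop_of_tendsto_deriv_atTop {f f' : ℝ → ℝ}
    (hf : ∀ᶠ x in atTop, HasDerivAt f (f' x) x) (hf' : Tendsto f' atTop atTop) :
    Tendsto (fun x => f x / x) atTop atTop := by
  refine tendsto_atTop.2 fun b => ?_
  obtain ⟨T, hT⟩ := eventually_atTop.1 (hf.and (hf'.eventually_ge_atTop (b + 1)))
  have growth : ∀ x, T ≤ x → (b + 1) * (x - T) ≤ f x - f T := by
    intro x hx
    refine (convex_Ici T).mul_sub_le_image_sub_of_le_deriv ?_ ?_ ?_ T self_mem_Ici x hx hx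
    · exact fun y hy => (hT y hy).1.continuousAt.continuousWithinAt
    · rw [interior_Ici]
      exact fun y hy => (hT y hy.le).1.differentiableAt.differentiableWithinAt
    · rw [interior_Ici]
      intro y hy
      rw [(hT y hy.le).1.deriv]
      exact (hT y hy.le).2
  filter_upwards [eventually_ge_atTop T, eventually_ge_atTop ((b + 1) * T - f T),
    eventually_gt_atTop 0] with x hxT hxC hx0
  rw [le_div_iff₀ hx0]
  linarith [growth x hxT]

theorem tendsto_sub_comp_const_mul_atTop_of_tendsto_mul_deriv {g g' : ℝ → ℝ} {α : ℝ}
    (hα : 1 < α) (hg : ∀ᶠ t in atTop, HasDerivAt g (g' t) t)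
    (hlim : Tendsto (fun t => t * g' t) atTop atTop) :
    Tendsto (fun t => g (α * t) - g t) atTop atTop := by
  have hα0 : 0 < α := by linarith
  have hα1 : 0 < α - 1 := by linarith
  refine tendsto_atTop.2 fun b => ?_
  set M := α / (α - 1) * max b 0 with hM
  have hM0 : 0 ≤ M := by positivity
  obtain ⟨T, hT⟩ := eventually_atTop.1 (hg.and (hlim.eventually_ge_atTop M))
  filter_upwards [eventually_ge_atTop T, eventually_gt_atTop 0] with t htT ht0
  obtain ⟨c, ⟨htc, hcα⟩, hslope⟩ := exists_hasDerivAt_eq_slope g g' (lt_mul_left ht0 hα)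
    (fun x hx => (hT x (htT.trans hx.1)).1.continuousAt.continuousWithinAt)
    (fun x hx => (hT x (htT.trans hx.1.le)).1)
  have hc0 : 0 < c := ht0.trans htc
  have hcM : M ≤ c * g' c := (hT c (htT.trans htc.le)).2
  have hg'c : 0 ≤ g' c := (mul_nonneg_iff_of_pos_left hc0).1 (hM0.trans hcM)
  have hdiff : g (α * t) - g t = (α - 1) * t * g' c := by
    rw [hslope]
    field_simp [hα1.ne']
  calc b ≤ max b 0 := le_max_left _ _
    _ = (α - 1) / α * M := by
      rw [hM]
      field_simp [hα1.ne']
    _ ≤ (α - 1) / α * (c * g' c) := by gcongr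
    _ ≤ (α - 1) / α * (α * t * g' c) := by gcongr
    _ = (α - 1) * t * g' c := by field_simp
    _ = g (α * t) - g t := hdiff.symm

/-- If `H` is twice differentiable on `(0,∞)` and `t · H''(t) → ∞` as `t → ∞`, then
for every `α > 1` one has `(H(αt) − α H(t))/t → ∞` as `t → ∞`. -/
theorem superlinear_of_tHpp_tendsto_atTop (H : ℝ → ℝ)
    (h1 : ∀ t : ℝ, 0 < t → DifferentiableAt ℝ H t)
    (h2 : ∀ t : ℝ, 0 < t → DifferentiableAt ℝ (deriv H) t)
    (hlim : Tendsto (fun t : ℝ => t * deriv (deriv H) t) atTop atTop)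
    (α : ℝ) (hα : 1 < α) :
    Tendsto (fun t : ℝ => (H (α * t) - α * H t) / t) atTop atTop := by
  have hα0 : 0 < α := by linarith
  have hG : ∀ᶠ t in atTop, HasDerivAt (fun t => H (α * t) - α * H t)
      (α * (deriv H (α * t) - deriv H t)) t := by
    filter_upwards [eventually_gt_atTop 0] with t ht
    have hscaled : HasDerivAt (fun s => H (α * s)) (deriv H (α * t) * α) t := by
      simpa [Function.comp_def] using (h1 (α * t) (mul_pos hα0 ht)).hasDerivAt.comp t
        ((hasDerivAt_id t).const_mul α)
    exact (hscaled.sub ((h1 t ht).hasDerivAt.const_mul α)).congr_deriv (by ring)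
  have hH' : Tendsto (fun t => deriv H (α * t) - deriv H t) atTop atTop :=
    tendsto_sub_comp_const_mul_atTop_of_tendsto_mul_deriv hα
      ((eventually_gt_atTop 0).mono fun t ht => (h2 t ht).hasDerivAt) hlim
  exact tendsto_div_atTop_of_tendsto_deriv_atTop hG (hH'.const_mul_atTop hα0)
end

section
/- Let H : (0,∞) → ℝ be twice differentiable with lim_{t→∞} t·H''(t) = ∞. Then for every real θ ≠ 0 with 1 + 2θ > 0, lim_{t→∞} (H((1+2θ)t) − 2·H((1+θ)t) + H(t)) / (θ² t) = ∞. Equivalently, in terms of the cumulant exponents G_θ(t) := (H((1+θ)t) − (1+θ)H(t))/θ, the strong intermittency condition holds: lim_{t→∞} (G_{2θ}(t) − G_θ(t))/(θ t) = ∞. -/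
/-!
Applying the mean value theorem twice, the second difference of `H` at `t, (1+θ)t, (1+2θ)t`
equals `H''(η) θ² t²` for some `η` between `t` and `(1+2θ)t`. Hence the quotient is `t H''(η)`,
and since `η` is comparable to `t`, it dominates `η H''(η) / max 1 (1+2θ)`, which tends to `∞`.
-/

open Filter Set

theorem exists_second_diff_eq_of_pos {H : ℝ → ℝ} {a h : ℝ} (hh : 0 < h)
    (hH : ∀ x ∈ Icc a (a + 2 * h), DifferentiableAt ℝ H x)
    (hH' : ∀ x ∈ Icc a (a + 2 * h), DifferentiableAt ℝ (deriv H) x) :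
    ∃ η ∈ Icc a (a + 2 * h),
      H (a + 2 * h) - 2 * H (a + h) + H a = deriv (deriv H) η * h ^ 2 := by
  have hmem : ∀ x ∈ Icc a (a + h), x ∈ Icc a (a + 2 * h) ∧ x + h ∈ Icc a (a + 2 * h) :=
    fun x hx => ⟨⟨hx.1, by linarith [hx.2]⟩, ⟨by linarith [hx.1], by linarith [hx.2]⟩⟩
  have hg : ∀ x ∈ Icc a (a + h),
      HasDerivAt (fun y => H (y + h) - H y) (deriv H (x + h) - deriv H x) x := fun x hx =>
    ((hH _ (hmem x hx).2).hasDerivAt.comp_add_const x h).sub (hH x (hmem x hx).1).hasDerivAt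
  obtain ⟨ξ, hξ, hξ_eq⟩ := exists_hasDerivAt_eq_slope _ _ (by linarith : a < a + h)
    (fun x hx => (hg x hx).continuousAt.continuousWithinAt)
    (fun x hx => hg x (Ioo_subset_Icc_self hx))
  have hξmem := hmem ξ (Ioo_subset_Icc_self hξ)
  have hH'_on : ∀ x ∈ Icc ξ (ξ + h), DifferentiableAt ℝ (deriv H) x := fun x hx =>
    hH' x ⟨hξmem.1.1.trans hx.1, hx.2.trans hξmem.2.2⟩
  obtain ⟨η, hη, hη_eq⟩ := exists_hasDerivAt_eq_slope (deriv H) (deriv (deriv H))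
    (by linarith : ξ < ξ + h) (fun x hx => (hH'_on x hx).continuousAt.continuousWithinAt)
    (fun x hx => (hH'_on x (Ioo_subset_Icc_self hx)).hasDerivAt)
  refine ⟨η, ⟨hξmem.1.1.trans hη.1.le, hη.2.le.trans hξmem.2.2⟩, ?_⟩
  rw [hη_eq, hξ_eq, add_sub_cancel_left, add_sub_cancel_left, add_assoc, ← two_mul]
  field_simp
  ring

theorem exists_second_diff_eq {H : ℝ → ℝ} {a h : ℝ} (hh : h ≠ 0)
    (hH : ∀ x ∈ uIcc a (a + 2 * h), DifferentiableAt ℝ H x)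
    (hH' : ∀ x ∈ uIcc a (a + 2 * h), DifferentiableAt ℝ (deriv H) x) :
    ∃ η ∈ uIcc a (a + 2 * h),
      H (a + 2 * h) - 2 * H (a + h) + H a = deriv (deriv H) η * h ^ 2 := by
  rcases hh.lt_or_gt with hneg | hpos
  -- the second difference is invariant under `(a, h) ↦ (a + 2h, -h)`
  · have hend : a + 2 * h + 2 * -h = a := by ring
    rw [uIcc_of_ge (by linarith)] at hH hH' ⊢
    obtain ⟨η, hη, hη_eq⟩ := exists_second_diff_eq_of_pos (H := H) (a := a + 2 * h)
      (neg_pos.2 hneg) (by rwa [hend]) (by rwa [hend])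
    rw [hend] at hη
    rw [hend, show a + 2 * h + -h = a + h by ring, neg_sq] at hη_eq
    exact ⟨η, hη, by linarith⟩
  · rw [uIcc_of_le (by linarith)] at hH hH' ⊢
    exact exists_second_diff_eq_of_pos hpos hH hH'

theorem tendsto_mul_comp_of_mem_uIcc {f η : ℝ → ℝ} (hf : Tendsto (fun x => x * f x) atTop atTop)
    {c : ℝ} (hc : 0 < c) (hη : ∀ᶠ t in atTop, η t ∈ uIcc t (c * t)) :
    Tendsto (fun t => t * f (η t)) atTop atTop := by
  have hbounds : ∀ᶠ t in atTop, min 1 c * t ≤ η t ∧ η t ≤ max 1 c * t := by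
    filter_upwards [hη, eventually_ge_atTop 0] with t ht ht0
    rw [min_mul_of_nonneg _ _ ht0, max_mul_of_nonneg _ _ ht0, one_mul]
    exact ht
  have hη_top : Tendsto η atTop atTop :=
    tendsto_atTop_mono' _ (hbounds.mono fun _ ht => ht.1)
      (tendsto_id.const_mul_atTop (lt_min one_pos hc))
  have hM : 0 < max 1 c := lt_max_of_lt_left one_pos
  refine tendsto_atTop_mono' _ ?_ ((hf.comp hη_top).atTop_div_const hM)
  filter_upwards [hbounds, hη_top.eventually_gt_atTop 0,
    (hf.comp hη_top).eventually_ge_atTop 0] with t ht hpos hnonneg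
  have hf_nonneg : 0 ≤ f (η t) := nonneg_of_mul_nonneg_right hnonneg hpos
  rw [Function.comp_apply, div_le_iff₀ hM]
  calc η t * f (η t) ≤ max 1 c * t * f (η t) := mul_le_mul_of_nonneg_right ht.2 hf_nonneg
    _ = t * f (η t) * max 1 c := by ring

/-- Strong intermittency: if `H` is twice differentiable on `(0,∞)` with
`t · H''(t) → ∞`, then for every `θ ≠ 0` with `1 + 2θ > 0`,
`(H((1+2θ)t) − 2 H((1+θ)t) + H(t)) / (θ² t) → ∞`, i.e. `(G_{2θ}(t) − G_θ(t))/(θ t) → ∞`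
for the cumulant exponents `G_θ(t) = (H((1+θ)t) − (1+θ)H(t))/θ`. -/
theorem strong_intermittency_of_tHpp_tendsto_atTop (H : ℝ → ℝ)
    (h1 : ∀ t : ℝ, 0 < t → DifferentiableAt ℝ H t)
    (h2 : ∀ t : ℝ, 0 < t → DifferentiableAt ℝ (deriv H) t)
    (hlim : Tendsto (fun t : ℝ => t * deriv (deriv H) t) atTop atTop)
    (θ : ℝ) (hθ : θ ≠ 0) (hθ' : 0 < 1 + 2 * θ) :
    Tendsto (fun t : ℝ => (H ((1 + 2 * θ) * t) - 2 * H ((1 + θ) * t) + H t) / (θ ^ 2 * t))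
      atTop atTop := by
  have hpos : ∀ t > 0, ∀ x ∈ uIcc t ((1 + 2 * θ) * t), 0 < x := fun t ht x hx =>
    (lt_min ht (mul_pos hθ' ht)).trans_le hx.1
  have hmvt : ∀ t > 0, ∃ η ∈ uIcc t ((1 + 2 * θ) * t),
      H ((1 + 2 * θ) * t) - 2 * H ((1 + θ) * t) + H t = deriv (deriv H) η * (θ * t) ^ 2 := by
    intro t ht
    have hpts : t + 2 * (θ * t) = (1 + 2 * θ) * t ∧ t + θ * t = (1 + θ) * t := by
      constructor <;> ring
    rw [← hpts.1, ← hpts.2]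
    exact exists_second_diff_eq (mul_ne_zero hθ ht.ne')
      (fun x hx => h1 x (hpos t ht x (hpts.1 ▸ hx))) (fun x hx => h2 x (hpos t ht x (hpts.1 ▸ hx)))
  choose! η hη hη_eq using hmvt
  refine (tendsto_mul_comp_of_mem_uIcc (η := η) hlim hθ' ?_).congr' ?_
  · filter_upwards [eventually_gt_atTop 0] with t ht using hη t ht
  · filter_upwards [eventually_gt_atTop 0] with t ht
    rw [hη_eq t ht]
    field_simp
end

section
/- Let H : (0,∞) → ℝ be twice differentiable with lim_{t→∞} t·H''(t) = ∞. Then for every real θ ≠ 0 with 1 + θ > 0 there exists t₀ ≥ 0 such that the function t ↦ G_θ(t) = (H((1+θ)t) − (1+θ)H(t))/θ is nondecreasing on [t₀, ∞). -/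
open Filter

/-- If `H` is twice differentiable on `(0,∞)` with `t · H''(t) → ∞`, then for every
`θ ≠ 0` with `1 + θ > 0`, the cumulant exponent `t ↦ G_θ(t) = (H((1+θ)t) − (1+θ)H(t))/θ`
is eventually nondecreasing: there is `t₀ ≥ 0` such that it is nondecreasing on `[t₀, ∞)`. -/
theorem cumulant_exponent_eventually_monotone (H : ℝ → ℝ)
    (h1 : ∀ t : ℝ, 0 < t → DifferentiableAt ℝ H t)
    (h2 : ∀ t : ℝ, 0 < t → DifferentiableAt ℝ (deriv H) t)
    (hlim : Tendsto (fun t : ℝ => t * deriv (deriv H) t) atTop atTop)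
    (θ : ℝ) (hθ : θ ≠ 0) (hθ' : 0 < 1 + θ) :
    ∃ t₀ : ℝ, 0 ≤ t₀ ∧
      MonotoneOn (fun t : ℝ => (H ((1 + θ) * t) - (1 + θ) * H t) / θ) (Set.Ici t₀) := by
  obtain ⟨T, hT⟩ := eventually_atTop.mp (hlim.eventually_ge_atTop 1)
  set a : ℝ := 1 + θ with ha
  set T₁ : ℝ := max T 1 with hT₁
  have hT₁pos : (0:ℝ) < T₁ := lt_of_lt_of_le one_pos (le_max_right _ _)
  set c : ℝ := min 1 a with hc
  have hcpos : 0 < c := lt_min one_pos hθ'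
  have hc1 : c ≤ 1 := min_le_left _ _
  have hca : c ≤ a := min_le_right _ _
  set t₀ : ℝ := T₁ / c with ht₀
  have ht₀pos : 0 < t₀ := div_pos hT₁pos hcpos
  -- key facts for t ≥ t₀
  have key : ∀ t : ℝ, t₀ ≤ t → T₁ ≤ t ∧ T₁ ≤ a * t := by
    intro t ht
    have h1' : T₁ ≤ c * t := by
      rw [ht₀, div_le_iff₀ hcpos] at ht
      nlinarith
    constructor
    · nlinarith
    · nlinarith
  -- deriv H is monotone on [T₁, ∞)
  have hmono : MonotoneOn (deriv H) (Set.Ici T₁) := by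
    apply monotoneOn_of_deriv_nonneg (convex_Ici T₁)
    · intro x hx
      exact (h2 x (lt_of_lt_of_le hT₁pos hx)).continuousAt.continuousWithinAt
    · intro x hx
      rw [interior_Ici] at hx
      exact ((h2 x (lt_trans hT₁pos hx)).differentiableWithinAt)
    · intro x hx
      rw [interior_Ici] at hx
      have hxT : T ≤ x := le_trans (le_max_left _ _) (le_of_lt hx)
      have hx1 : (1:ℝ) ≤ x := le_trans (le_max_right _ _) (le_of_lt hx)
      have := hT x hxT
      have hxpos : 0 < x := lt_of_lt_of_le one_pos hx1
      nlinarith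
  -- derivative of G
  have hG : ∀ t : ℝ, 0 < t →
      HasDerivAt (fun t : ℝ => (H (a * t) - a * H t) / θ)
        ((deriv H (a * t) * a - a * deriv H t) / θ) t := by
    intro t ht
    have hat : 0 < a * t := mul_pos hθ' ht
    have hd1 : HasDerivAt (fun t : ℝ => H (a * t)) (deriv H (a * t) * a) t := by
      have hinner : HasDerivAt (fun t : ℝ => a * t) a t := by
        simpa using (hasDerivAt_id t).const_mul a
      exact (h1 (a * t) hat).hasDerivAt.comp t hinner
    have hd2 : HasDerivAt (fun t : ℝ => a * H t) (a * deriv H t) t :=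
      (h1 t ht).hasDerivAt.const_mul a
    exact (hd1.sub hd2).div_const θ
  refine ⟨t₀, le_of_lt ht₀pos, ?_⟩
  apply monotoneOn_of_deriv_nonneg (convex_Ici t₀)
  · intro x hx
    exact (hG x (lt_of_lt_of_le ht₀pos hx)).differentiableAt.continuousAt.continuousWithinAt
  · intro x hx
    rw [interior_Ici] at hx
    exact (hG x (lt_trans ht₀pos hx)).differentiableAt.differentiableWithinAt
  · intro x hx
    rw [interior_Ici] at hx
    have hxpos : 0 < x := lt_trans ht₀pos hx
    rw [(hG x hxpos).deriv]
    obtain ⟨hx1, hx2⟩ := key x (le_of_lt hx)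
    rcases lt_or_gt_of_ne hθ with hneg | hpos
    · -- θ < 0 : a * x ≤ x
      have hax : a * x ≤ x := by nlinarith
      have := hmono hx2 hx1 hax
      have hnum : deriv H (a * x) * a - a * deriv H x ≤ 0 := by nlinarith
      rw [div_nonneg_iff]; exact Or.inr ⟨hnum, le_of_lt hneg⟩
    · -- θ > 0 : x ≤ a * x
      have hax : x ≤ a * x := by nlinarith
      have := hmono hx1 hx2 hax
      have hnum : 0 ≤ deriv H (a * x) * a - a * deriv H x := by nlinarith
      exact div_nonneg hnum (le_of_lt hpos)
end

section
/- Let H : (0,∞) → ℝ be twice differentiable with lim_{t→∞} t·H''(t) = ∞. Then there exists t₁ ≥ 0 such that for every t ≥ t₁ the map θ ↦ G_θ(t) = (H((1+θ)t) − (1+θ)H(t))/θ is nondecreasing on [−1/2, ∞) \ {0}: whenever −1/2 ≤ θ < θ' with θ ≠ 0 and θ' ≠ 0, one has G_θ(t) ≤ G_{θ'}(t). -/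
/-!
Since `t · H''(t) → ∞`, `H'' ≥ 0` on some `[T, ∞)`, so `H` is convex there. For `t ≥ 2T` and
`θ ≥ -1/2` the point `(1+θ)t` lies in `[T, ∞)`, and
`G_θ(t) = t · slope H t ((1+θ)t) - H(t)`; the slopes of a convex function from a fixed point
are nondecreasing, and `θ ↦ (1+θ)t` is increasing.
-/

open Filter Set

noncomputable def cumulantExponent (H : ℝ → ℝ) (θ t : ℝ) : ℝ :=
  (H ((1 + θ) * t) - (1 + θ) * H t) / θ

theorem cumulantExponent_eq_slope (H : ℝ → ℝ) {θ t : ℝ} (hθ : θ ≠ 0) (ht : t ≠ 0) :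
    cumulantExponent H θ t = t * slope H t ((1 + θ) * t) - H t := by
  rw [cumulantExponent, slope_def_field, show (1 + θ) * t - t = θ * t by ring]
  field_simp
  ring

theorem cumulantExponent_mono_of_convexOn {H : ℝ → ℝ} {s : Set ℝ} (hH : ConvexOn ℝ s H)
    {t θ θ' : ℝ} (ht : 0 < t) (hts : t ∈ s) (hθs : (1 + θ) * t ∈ s) (hθ's : (1 + θ') * t ∈ s)
    (hθθ' : θ ≤ θ') (hθ : θ ≠ 0) (hθ' : θ' ≠ 0) :
    cumulantExponent H θ t ≤ cumulantExponent H θ' t := by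
  have hne : ∀ {η : ℝ}, η ≠ 0 → (1 + η) * t ≠ t := fun hη h => hη (by nlinarith)
  rw [cumulantExponent_eq_slope H hθ ht.ne', cumulantExponent_eq_slope H hθ' ht.ne',
    slope_def_field, slope_def_field]
  exact sub_le_sub_right (mul_le_mul_of_nonneg_left
    (hH.secant_mono hts hθs hθ's (hne hθ) (hne hθ') (by gcongr)) ht.le) _

theorem eventually_nonneg_of_tendsto_mul_atTop {g : ℝ → ℝ}
    (h : Tendsto (fun t => t * g t) atTop atTop) : ∀ᶠ t in atTop, 0 ≤ g t := by
  filter_upwards [h.eventually_ge_atTop 0, eventually_gt_atTop 0] with t hmul ht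
  exact nonneg_of_mul_nonneg_right hmul ht

theorem convexOn_Ici_of_deriv2_nonneg {H : ℝ → ℝ} {T : ℝ}
    (h1 : ∀ t, T ≤ t → DifferentiableAt ℝ H t)
    (h2 : ∀ t, T ≤ t → DifferentiableAt ℝ (deriv H) t)
    (hnonneg : ∀ t, T ≤ t → 0 ≤ deriv (deriv H) t) : ConvexOn ℝ (Ici T) H :=
  convexOn_of_deriv2_nonneg' (convex_Ici T)
    (fun t ht => (h1 t ht).differentiableWithinAt)
    (fun t ht => (h2 t ht).differentiableWithinAt) hnonneg

/-- If `H` is twice differentiable on `(0,∞)` with `t · H''(t) → ∞`, then for all large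
enough `t`, the cumulant exponent `θ ↦ G_θ(t) = (H((1+θ)t) − (1+θ)H(t))/θ` is
nondecreasing in `θ` on `[−1/2, ∞) \ {0}`. -/
theorem cumulant_exponent_eventually_monotone_in_theta (H : ℝ → ℝ)
    (h1 : ∀ t : ℝ, 0 < t → DifferentiableAt ℝ H t)
    (h2 : ∀ t : ℝ, 0 < t → DifferentiableAt ℝ (deriv H) t)
    (hlim : Tendsto (fun t : ℝ => t * deriv (deriv H) t) atTop atTop) :
    ∃ t₁ : ℝ, 0 ≤ t₁ ∧ ∀ t : ℝ, t₁ ≤ t →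
      ∀ θ θ' : ℝ, -(1/2 : ℝ) ≤ θ → θ < θ' → θ ≠ 0 → θ' ≠ 0 →
        (H ((1 + θ) * t) - (1 + θ) * H t) / θ ≤ (H ((1 + θ') * t) - (1 + θ') * H t) / θ' := by
  obtain ⟨T, hT⟩ := eventually_atTop.mp
    ((eventually_nonneg_of_tendsto_mul_atTop hlim).and (eventually_gt_atTop 0))
  have hT0 : 0 < T := (hT T le_rfl).2
  have hconv : ConvexOn ℝ (Ici T) H := convexOn_Ici_of_deriv2_nonneg
    (fun t ht => h1 t (hT0.trans_le ht)) (fun t ht => h2 t (hT0.trans_le ht))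
    fun t ht => (hT t ht).1
  refine ⟨2 * T, by positivity, fun t ht θ θ' hθ hθθ' hθ0 hθ'0 => ?_⟩
  have hmem : ∀ η : ℝ, -(1/2 : ℝ) ≤ η → (1 + η) * t ∈ Ici T := fun η hη => by
    rw [mem_Ici]
    nlinarith
  exact cumulantExponent_mono_of_convexOn hconv (by linarith) (mem_Ici.mpr (by linarith))
    (hmem θ hθ) (hmem θ' (by linarith)) hθθ'.le hθ0 hθ'0
end

section
/- (von Bahr–Esseen inequality) Let 1 ≤ r ≤ 2 and let X_1, …, X_n be independent real-valued random variables on a common probability space with E[X_k] = 0 and E[|X_k|^r] < ∞ for each k. Then E[|X_1 + ⋯ + X_n|^r] ≤ 2 · Σ_{k=1}^n E[|X_k|^r]. -/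
/-!
The pointwise inequality `|x + y| ^ r ≤ |x| ^ r + r |x| ^ (r - 2) x y + 2 |y| ^ r` bounds
`|·| ^ r` by its first-order Taylor expansion at `x` plus `2 |y| ^ r`. By homogeneity it reduces
to `x = 1`, where it follows from monotonicity arguments on `[0, ∞)` and `[-1, 0]` (the derivatives
have the right sign by subadditivity of `t ↦ t ^ (r - 1)`) and from Bernoulli's inequality on
`(-∞, -1]`. Taking `x = X₁ + ⋯ + Xₖ₋₁` and `y = Xₖ`, the linear term has expectation
`E[r |x| ^ (r - 2) x] · E[Xₖ] = 0` by independence, so `E|Sₖ| ^ r ≤ E|Sₖ₋₁| ^ r + 2 E|Xₖ| ^ r`.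
-/

open MeasureTheory ProbabilityTheory

namespace Real

variable {r : ℝ}

theorem one_add_rpow_le_one_add_mul_add_rpow (hr1 : 1 ≤ r) (hr2 : r ≤ 2) {t : ℝ} (ht : 0 ≤ t) :
    (1 + t) ^ r ≤ 1 + r * t + t ^ r := by
  set g : ℝ → ℝ := fun t => 1 + r * t + t ^ r - (1 + t) ^ r
  have hg : ∀ x, HasDerivAt g (r + r * x ^ (r - 1) - 1 * r * (1 + x) ^ (r - 1)) x := fun x =>
    ((((hasDerivAt_id x).const_mul r).const_add 1).add
      (hasDerivAt_rpow_const (Or.inr hr1))).sub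
      (((hasDerivAt_id x).const_add 1).rpow_const (Or.inr hr1)) |>.congr_deriv (by simp)
  have hmono : MonotoneOn g (Set.Ici 0) := by
    refine monotoneOn_of_deriv_nonneg (convex_Ici 0)
      (fun x _ => (hg x).continuousAt.continuousWithinAt)
      (fun x _ => (hg x).differentiableAt.differentiableWithinAt) fun x hx => ?_
    rw [interior_Ici] at hx
    have hsub : (1 + x) ^ (r - 1) ≤ 1 ^ (r - 1) + x ^ (r - 1) :=
      rpow_add_le_add_rpow zero_le_one (le_of_lt hx) (by linarith) (by linarith)
    rw [one_rpow] at hsub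
    rw [(hg x).deriv]
    nlinarith
  have := hmono Set.self_mem_Ici (Set.mem_Ici.2 ht) ht
  simp only [g, mul_zero, add_zero, zero_rpow (by linarith : r ≠ 0), one_rpow, sub_self] at this
  linarith

theorem one_sub_rpow_le_one_sub_mul_add_rpow (hr1 : 1 ≤ r) (hr2 : r ≤ 2) {s : ℝ} (hs0 : 0 ≤ s)
    (hs1 : s ≤ 1) : (1 - s) ^ r ≤ 1 - r * s + s ^ r := by
  set g : ℝ → ℝ := fun s => 1 - r * s + s ^ r - (1 - s) ^ r
  have hg : ∀ x, HasDerivAt g (-r + r * x ^ (r - 1) - -1 * r * (1 - x) ^ (r - 1)) x := fun x =>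
    ((((hasDerivAt_id x).const_mul r).const_sub 1).add
      (hasDerivAt_rpow_const (Or.inr hr1))).sub
      (((hasDerivAt_id x).const_sub 1).rpow_const (Or.inr hr1)) |>.congr_deriv (by simp)
  have hmono : MonotoneOn g (Set.Icc 0 1) := by
    refine monotoneOn_of_deriv_nonneg (convex_Icc 0 1)
      (fun x _ => (hg x).continuousAt.continuousWithinAt)
      (fun x _ => (hg x).differentiableAt.differentiableWithinAt) fun x hx => ?_
    rw [interior_Icc] at hx
    have hsub : (x + (1 - x)) ^ (r - 1) ≤ x ^ (r - 1) + (1 - x) ^ (r - 1) :=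
      rpow_add_le_add_rpow hx.1.le (by linarith [hx.2]) (by linarith) (by linarith)
    rw [add_sub_cancel, one_rpow] at hsub
    rw [(hg x).deriv]
    nlinarith
  have := hmono ⟨le_rfl, zero_le_one⟩ ⟨hs0, hs1⟩ hs0
  simp only [g, mul_zero, sub_zero, zero_rpow (by linarith : r ≠ 0), one_rpow, add_zero,
    sub_self] at this
  linarith

theorem abs_one_add_rpow_le (hr1 : 1 ≤ r) (hr2 : r ≤ 2) (t : ℝ) :
    |1 + t| ^ r ≤ 1 + r * t + 2 * |t| ^ r := by
  rcases le_total 0 t with ht | ht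
  · rw [abs_of_nonneg (by linarith), abs_of_nonneg ht]
    linarith [one_add_rpow_le_one_add_mul_add_rpow hr1 hr2 ht, rpow_nonneg ht r]
  rw [abs_of_nonpos ht]
  rcases le_total (-1) t with ht1 | ht1
  · rw [abs_of_nonneg (by linarith), ← sub_neg_eq_add]
    linarith [one_sub_rpow_le_one_sub_mul_add_rpow hr1 hr2 (neg_nonneg.2 ht) (by linarith),
      rpow_nonneg (neg_nonneg.2 ht) r]
  · have hmono : |1 + t| ^ r ≤ (-t) ^ r :=
      rpow_le_rpow (abs_nonneg _) (by rw [abs_of_nonpos (by linarith)]; linarith) (by linarith)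
    have hbern := one_add_mul_self_le_rpow_one_add (s := -t - 1) (by linarith) hr1
    rw [add_sub_cancel] at hbern
    nlinarith

theorem abs_add_rpow_le (hr1 : 1 ≤ r) (hr2 : r ≤ 2) (x y : ℝ) :
    |x + y| ^ r ≤ |x| ^ r + r * (|x| ^ (r - 2) * x) * y + 2 * |y| ^ r := by
  rcases eq_or_ne x 0 with rfl | hx
  · simp only [zero_add, abs_zero, zero_rpow (by linarith : r ≠ 0), mul_zero, zero_mul]
    linarith [rpow_nonneg (abs_nonneg y) r]
  have hx' : 0 < |x| := abs_pos.2 hx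
  have hscale : ∀ z, |x * z| ^ r = |x| ^ r * |z| ^ r := fun z => by
    rw [abs_mul, mul_rpow hx'.le (abs_nonneg z)]
  have hlin : |x| ^ r * (y / x) = |x| ^ (r - 2) * x * y := by
    rw [show r = r - 2 + 2 by ring, rpow_add hx', rpow_two, sq_abs, sub_add_cancel]
    field_simp
  calc |x + y| ^ r = |x| ^ r * |1 + y / x| ^ r := by rw [← hscale]; field_simp
    _ ≤ |x| ^ r * (1 + r * (y / x) + 2 * |y / x| ^ r) :=
      mul_le_mul_of_nonneg_left (abs_one_add_rpow_le hr1 hr2 _) (by positivity)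
    _ = |x| ^ r + r * (|x| ^ r * (y / x)) + 2 * |x * (y / x)| ^ r := by rw [hscale]; ring
    _ = |x| ^ r + r * (|x| ^ (r - 2) * x) * y + 2 * |y| ^ r := by
      rw [hlin, mul_div_cancel₀ y hx]; ring

end Real

section

variable {Ω : Type*} [MeasurableSpace Ω] {μ : Measure Ω} {r : ℝ} {f g : Ω → ℝ}

theorem integrable_abs_rpow_sub_two_mul_self [IsFiniteMeasure μ] (hr1 : 1 ≤ r)
    (hf : AEMeasurable f μ) (hfr : Integrable (fun ω => |f ω| ^ r) μ) :
    Integrable (fun ω => |f ω| ^ (r - 2) * f ω) μ := by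
  have hfr' : Integrable (fun ω => |f ω| ^ (r - 1)) μ :=
    integrable_norm_rpow_of_le hf.aestronglyMeasurable (by linarith) (by linarith) (by linarith)
      hfr
  refine hfr'.mono' (by fun_prop) (Filter.Eventually.of_forall fun ω => ?_)
  rw [Real.norm_eq_abs, abs_mul, abs_of_nonneg (by positivity)]
  rcases eq_or_ne (f ω) 0 with h | h
  · simp only [h, abs_zero, mul_zero]
    positivity
  · rw [← Real.rpow_add_one (abs_ne_zero.2 h), show r - 2 + 1 = r - 1 by ring]

theorem ProbabilityTheory.IndepFun.integral_abs_add_rpow_le [IsProbabilityMeasure μ]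
    (hfg : IndepFun f g μ) (hf : AEMeasurable f μ) (hg : AEMeasurable g μ)
    (hr1 : 1 ≤ r) (hr2 : r ≤ 2) (hfr : Integrable (fun ω => |f ω| ^ r) μ)
    (hgr : Integrable (fun ω => |g ω| ^ r) μ) (hg0 : ∫ ω, g ω ∂μ = 0) :
    Integrable (fun ω => |f ω + g ω| ^ r) μ ∧
      ∫ ω, |f ω + g ω| ^ r ∂μ ≤ ∫ ω, |f ω| ^ r ∂μ + 2 * ∫ ω, |g ω| ^ r ∂μ := by
  have hr0 : 0 ≤ r := by linarith
  set φ : ℝ → ℝ := fun x => |x| ^ (r - 2) * x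
  have hφ : Measurable φ := by fun_prop
  have hgi : Integrable g μ := by
    refine (integrable_norm_iff hg.aestronglyMeasurable).1 ?_
    simpa using
      integrable_norm_rpow_of_le hg.aestronglyMeasurable zero_le_one (by linarith) hr1 hgr
  have hcross_int : Integrable (fun ω => r * (φ (f ω) * g ω)) μ :=
    ((hfg.comp hφ measurable_id).integrable_mul
      (integrable_abs_rpow_sub_two_mul_self hr1 hf hfr) hgi).const_mul r
  have hcross_zero : ∫ ω, r * (φ (f ω) * g ω) ∂μ = 0 := by
    have hsplit := hfg.integral_fun_comp_mul_comp (g := id) hf hg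
      hφ.aestronglyMeasurable aestronglyMeasurable_id
    simp only [id] at hsplit
    rw [integral_const_mul, hsplit, hg0, mul_zero, mul_zero]
  have hfirst_int : Integrable (fun ω => |f ω| ^ r + r * (φ (f ω) * g ω)) μ :=
    hfr.add hcross_int
  have hbound_int : Integrable
      (fun ω => |f ω| ^ r + r * (φ (f ω) * g ω) + 2 * |g ω| ^ r) μ :=
    hfirst_int.add (hgr.const_mul 2)
  have hbound : ∀ ω, |f ω + g ω| ^ r ≤ |f ω| ^ r + r * (φ (f ω) * g ω) + 2 * |g ω| ^ r :=
    fun ω => (Real.abs_add_rpow_le hr1 hr2 (f ω) (g ω)).trans_eq (by ring)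
  have hint : Integrable (fun ω => |f ω + g ω| ^ r) μ :=
    hbound_int.mono' (by fun_prop) (Filter.Eventually.of_forall fun ω => by
      rw [Real.norm_of_nonneg (by positivity)]; exact hbound ω)
  refine ⟨hint, (integral_mono hint hbound_int hbound).trans_eq ?_⟩
  rw [integral_add hfirst_int (hgr.const_mul 2), integral_add hfr hcross_int,
    hcross_zero, integral_const_mul, add_zero]

theorem ProbabilityTheory.iIndepFun.integral_abs_sum_rpow_le [IsProbabilityMeasure μ]
    {ι : Type*} {X : ι → Ω → ℝ} (hindep : iIndepFun X μ) (hmeas : ∀ k, AEMeasurable (X k) μ)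
    (hr1 : 1 ≤ r) (hr2 : r ≤ 2) (hmean : ∀ k, ∫ ω, X k ω ∂μ = 0)
    (hint : ∀ k, Integrable (fun ω => |X k ω| ^ r) μ) (s : Finset ι) :
    Integrable (fun ω => |∑ k ∈ s, X k ω| ^ r) μ ∧
      ∫ ω, |∑ k ∈ s, X k ω| ^ r ∂μ ≤ 2 * ∑ k ∈ s, ∫ ω, |X k ω| ^ r ∂μ := by
  classical
  induction s using Finset.induction_on with
  | empty => simp [Real.zero_rpow (by linarith : r ≠ 0)]
  | @insert k s hk ih =>
    have hindep_k : IndepFun (fun ω => ∑ j ∈ s, X j ω) (X k) μ := by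
      simpa only [Finset.sum_fn] using hindep.indepFun_finsetSum_of_notMem₀ hmeas hk
    have hstep := hindep_k.integral_abs_add_rpow_le
      (Finset.aemeasurable_fun_sum s fun j _ => hmeas j) (hmeas k) hr1 hr2 ih.1 (hint k) (hmean k)
    simp only [Finset.sum_insert hk, add_comm (X k _)]
    exact ⟨hstep.1, by linarith [hstep.2, ih.2]⟩

end

/-- The von Bahr–Esseen inequality: for `1 ≤ r ≤ 2` and independent centered random
variables `X₁, …, Xₙ` with finite `r`-th absolute moments,
`E|X₁ + ⋯ + Xₙ|^r ≤ 2 ∑ₖ E|Xₖ|^r`. -/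
theorem von_bahr_esseen {Ω : Type*} [MeasurableSpace Ω]
    (μ : Measure Ω) [IsProbabilityMeasure μ]
    (r : ℝ) (hr1 : 1 ≤ r) (hr2 : r ≤ 2)
    (n : ℕ) (X : Fin n → Ω → ℝ)
    (hmeas : ∀ k, Measurable (X k))
    (hindep : iIndepFun X μ)
    (hmean : ∀ k, ∫ ω, X k ω ∂μ = 0)
    (hint : ∀ k, Integrable (fun ω => |X k ω| ^ r) μ) :
    ∫ ω, |∑ k, X k ω| ^ r ∂μ ≤ 2 * ∑ k, ∫ ω, |X k ω| ^ r ∂μ :=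
  (hindep.integral_abs_sum_rpow_le (fun k => (hmeas k).aemeasurable) hr1 hr2 hmean hint
    Finset.univ).2
end

section
/- Let d ≥ 1 and let (Y_x)_{x∈ℤ^d} be independent, identically distributed nonnegative real random variables with E[(Y_0 / log₊ Y_0)^d] < ∞. Then almost surely lim_{|x|→∞} Y_x/(|x|·log|x|) = 0; that is, for every ε > 0, almost surely Y_x ≤ ε·|x|·log|x| for all but finitely many x ∈ ℤ^d. -/
/-! By the first Borel–Cantelli lemma it is enough that `∑ₓ P(Y_x > ε |x| log |x|) < ∞`.
Inverting `t ↦ ε t log t` shows that `ε |x| log |x| < y` forces `|x| ≤ N + K |y / log₊ y|`,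
so at most `(2 (N + K |Y₀ / log₊ Y₀|) + 1)^d` lattice points `x` satisfy
`ε |x| log |x| < Y₀`, a bound that is integrable by the moment hypothesis. As every `Y_x` has
the law of `Y₀`, the expectation of this count is the series above. -/

open MeasureTheory ProbabilityTheory Real Set
open scoped ENNReal

noncomputable def logPlus (y : ℝ) : ℝ := if exp 1 < y then log y else 1

noncomputable def latticeNorm {d : ℕ} (x : Fin d → ℤ) : ℝ := √(∑ i, (x i : ℝ) ^ 2)

lemma measurable_logPlus : Measurable logPlus :=
  Measurable.ite measurableSet_Ioi measurable_log measurable_const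

lemma le_mul_div_log_of_mul_mul_log_lt {ε t y : ℝ} (hε : 0 < ε) (hy : 1 < y)
    (h : ε * t * log t < y) : t ≤ max (2 / ε) 2 * (y / log y) := by
  have hy0 : 0 < y := by linarith
  have hlogy : 0 < log y := log_pos hy
  have hsqrt : 0 < √y := sqrt_pos.2 hy0
  -- For `t ≤ √y` use `log y ≤ 2 √y`; for `t > √y` use `log t > log y / 2`.
  rcases le_or_gt t √y with ht | ht
  · have hlog_le : log y ≤ 2 * √y := by
      have := log_le_sub_one_of_pos hsqrt
      rw [log_sqrt hy0.le] at this
      linarith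
    calc t ≤ √y := ht
      _ ≤ 2 * (y / log y) := by
        rw [mul_div_assoc', le_div_iff₀ hlogy]
        nlinarith [mul_self_sqrt hy0.le]
      _ ≤ _ := by gcongr; exact le_max_right _ _
  · have ht0 : 0 < t := hsqrt.trans ht
    have hlogt : log y / 2 < log t := by
      rw [← log_sqrt hy0.le]; exact log_lt_log hsqrt ht
    calc t ≤ 2 / ε * (y / log y) := by
          rw [div_mul_div_comm, le_div_iff₀ (by positivity)]
          nlinarith [mul_pos hε ht0]
      _ ≤ _ := by gcongr; exact le_max_left _ _

lemma exists_le_add_mul_abs_div_logPlus {ε : ℝ} (hε : 0 < ε) :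
    ∃ N K : ℝ, 0 ≤ N ∧ 0 ≤ K ∧
      ∀ t y, ε * t * log t < y → t ≤ N + K * |y / logPlus y| := by
  refine ⟨max (exp 1) (exp 1 / ε), max (2 / ε) 2, by positivity, by positivity,
    fun t y h => ?_⟩
  by_cases hy : exp 1 < y
  · have hy1 : 1 < y := (one_lt_exp_iff.2 one_pos).trans hy
    rw [logPlus, if_pos hy]
    calc t ≤ max (2 / ε) 2 * (y / log y) := le_mul_div_log_of_mul_mul_log_lt hε hy1 h
      _ ≤ max (2 / ε) 2 * |y / log y| := by gcongr; exact le_abs_self _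
      _ ≤ _ := le_add_of_nonneg_left (by positivity)
  · suffices t ≤ max (exp 1) (exp 1 / ε) by
      linarith [show 0 ≤ max (2 / ε) 2 * |y / logPlus y| by positivity]
    by_contra! H
    have hte : exp 1 < t := (le_max_left _ _).trans_lt H
    have htε : exp 1 / ε < t := (le_max_right _ _).trans_lt H
    have hlogt : 1 < log t := (lt_log_iff_exp_lt ((exp_pos 1).trans hte)).2 hte
    rw [div_lt_iff₀ hε] at htε
    nlinarith [mul_pos hε ((exp_pos 1).trans hte)]

lemma abs_le_latticeNorm {d : ℕ} (x : Fin d → ℤ) (i : Fin d) :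
    |(x i : ℝ)| ≤ latticeNorm x := by
  rw [← sqrt_sq_eq_abs]
  exact sqrt_le_sqrt
    (Finset.single_le_sum (fun j _ => sq_nonneg (x j : ℝ)) (Finset.mem_univ i))

lemma encard_setOf_latticeNorm_le (d : ℕ) {t : ℝ} (ht : 0 ≤ t) :
    ({x : Fin d → ℤ | latticeNorm x ≤ t}.encard : ℝ≥0∞) ≤
      ENNReal.ofReal ((2 * t + 1) ^ d) := by
  set n := ⌊t⌋₊
  have hbox : {x : Fin d → ℤ | latticeNorm x ≤ t} ⊆
      ↑(Fintype.piFinset fun _ : Fin d => Finset.Icc (-n : ℤ) n) := by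
    intro x hx
    rw [Finset.mem_coe, Fintype.mem_piFinset]
    intro i
    have : |(x i : ℝ)| ≤ t := (abs_le_latticeNorm x i).trans hx
    have : (x i).natAbs ≤ n := Nat.le_floor (by rwa [Nat.cast_natAbs, Int.cast_abs])
    rw [Finset.mem_Icc]
    omega
  calc ({x : Fin d → ℤ | latticeNorm x ≤ t}.encard : ℝ≥0∞)
      ≤ ((↑(Fintype.piFinset fun _ : Fin d => Finset.Icc (-n : ℤ) n) :
          Set (Fin d → ℤ)).encard : ℝ≥0∞) := by exact_mod_cast encard_le_encard hbox
    _ = ENNReal.ofReal ((2 * n + 1) ^ d) := by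
        rw [encard_coe_eq_coe_finsetCard, Fintype.card_piFinset]
        simp only [Int.card_Icc, sub_neg_eq_add, Finset.prod_const, Finset.card_univ,
          Fintype.card_fin, ENat.toENNReal_coe]
        rw [show ((n : ℤ) + 1 + n).toNat = 2 * n + 1 by omega, ← ENNReal.ofReal_natCast]
        push_cast; rfl
    _ ≤ ENNReal.ofReal ((2 * t + 1) ^ d) := by
        gcongr; exact Nat.floor_le ht

lemma tsum_measure_Ioi_eq_lintegral_encard {ι : Type*} [Countable ι] (ν : Measure ℝ)
    (c : ι → ℝ) : ∑' i, ν (Ioi (c i)) = ∫⁻ y, ({i | c i < y}.encard : ℝ≥0∞) ∂ν := by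
  have hcount : ∀ y, ({i | c i < y}.encard : ℝ≥0∞) = ∑' i, (Ioi (c i)).indicator 1 y := by
    intro y
    rw [← ENNReal.tsum_set_one]
    exact (tsum_subtype _ (1 : ι → ℝ≥0∞)).trans (tsum_congr fun i => by simp [indicator])
  simp_rw [hcount]
  rw [lintegral_tsum fun i => (measurable_one.indicator measurableSet_Ioi).aemeasurable]
  simp [lintegral_indicator_one measurableSet_Ioi]

lemma ae_finite_setOf_lt_of_identDistrib {Ω ι : Type*} [MeasurableSpace Ω] [Countable ι]
    {μ : Measure Ω} {X : ι → Ω → ℝ} {X₀ : Ω → ℝ} (hX : ∀ i, IdentDistrib (X i) X₀ μ μ)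
    {c : ι → ℝ} (h : ∫⁻ y, ({i | c i < y}.encard : ℝ≥0∞) ∂μ.map X₀ ≠ ∞) :
    ∀ᵐ ω ∂μ, {i | c i < X i ω}.Finite := by
  refine ae_finite_setOfPred_mem (s := fun i => X i ⁻¹' Ioi (c i)) ?_
  have hlaw : ∀ i, μ (X i ⁻¹' Ioi (c i)) = μ.map X₀ (Ioi (c i)) := fun i => by
    rw [← (hX i).map_eq,
      Measure.map_apply_of_aemeasurable (hX i).aemeasurable_fst measurableSet_Ioi]
  rwa [tsum_congr hlaw, tsum_measure_Ioi_eq_lintegral_encard]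

lemma lintegral_encard_setOf_mul_mul_log_lt_ne_top {d : ℕ} {ε : ℝ} (hε : 0 < ε)
    (ν : Measure ℝ) [IsFiniteMeasure ν] (hν : Integrable (fun y => (y / logPlus y) ^ d) ν) :
    ∫⁻ y, ({x : Fin d → ℤ | ε * latticeNorm x * log (latticeNorm x) < y}.encard : ℝ≥0∞) ∂ν
      ≠ ∞ := by
  obtain ⟨N, K, hN, hK, hbound⟩ := exists_le_add_mul_abs_div_logPlus hε
  have hcount : ∀ y,
      ({x : Fin d → ℤ | ε * latticeNorm x * log (latticeNorm x) < y}.encard : ℝ≥0∞) ≤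
        ENNReal.ofReal (2 ^ (d - 1) *
          ((2 * N + 1) ^ d + (2 * K) ^ d * |(y / logPlus y) ^ d|)) := by
    intro y
    calc _ ≤ ({x : Fin d → ℤ | latticeNorm x ≤ N + K * |y / logPlus y|}.encard
            : ℝ≥0∞) := by exact_mod_cast encard_le_encard fun x hx => hbound _ _ hx
      _ ≤ ENNReal.ofReal ((2 * (N + K * |y / logPlus y|) + 1) ^ d) :=
          encard_setOf_latticeNorm_le d (by positivity)
      _ ≤ _ := by
          gcongr
          rw [abs_pow, ← mul_pow, show 2 * (N + K * |y / logPlus y|) + 1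
            = (2 * N + 1) + 2 * K * |y / logPlus y| by ring]
          exact add_pow_le (by positivity) (by positivity) d
  refine ((lintegral_mono hcount).trans_lt ?_).ne
  exact (((integrable_const _).add (hν.abs.const_mul _)).const_mul _).lintegral_lt_top

theorem iid_field_sublinear_growth_general {Ω : Type*} [MeasurableSpace Ω]
    (μ : Measure Ω) [IsProbabilityMeasure μ]
    (d : ℕ) (Y : (Fin d → ℤ) → Ω → ℝ)
    (hident : ∀ x, IdentDistrib (Y x) (Y 0) μ μ)
    (hint : Integrable
      (fun ω => (Y 0 ω / (if Real.exp 1 < Y 0 ω then Real.log (Y 0 ω) else 1)) ^ d) μ) :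
    ∀ ε : ℝ, 0 < ε → ∀ᵐ ω ∂μ,
      {x : Fin d → ℤ |
        ¬ Y x ω ≤ ε * Real.sqrt (∑ i, ((x i : ℝ)) ^ 2) *
            Real.log (Real.sqrt (∑ i, ((x i : ℝ)) ^ 2))}.Finite := by
  intro ε hε
  have hlaw : Integrable (fun y => (y / logPlus y) ^ d) (μ.map (Y 0)) :=
    (integrable_map_measure
      ((measurable_id.div measurable_logPlus).pow_const d).aestronglyMeasurable
      (hident 0).aemeasurable_fst).2 hint
  filter_upwards [ae_finite_setOf_lt_of_identDistrib hident
    (lintegral_encard_setOf_mul_mul_log_lt_ne_top hε _ hlaw)] with ω hω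
  simpa only [not_le, latticeNorm] using hω

/-- For an i.i.d. family `(Y_x)_{x ∈ ℤ^d}` of nonnegative random variables with
`E[(Y₀ / log₊ Y₀)^d] < ∞`, almost surely `Y_x / (|x| log |x|) → 0` as `|x| → ∞`:
for each `ε > 0`, almost surely `Y_x ≤ ε |x| log |x|` for all but finitely many `x`,
where `|x|` is the Euclidean norm and `log₊ y = log y` for `y > e`, `= 1` otherwise. -/
theorem iid_field_sublinear_growth {Ω : Type*} [MeasurableSpace Ω]
    (μ : Measure Ω) [IsProbabilityMeasure μ]
    (d : ℕ) (hd : 1 ≤ d) (Y : (Fin d → ℤ) → Ω → ℝ)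
    (hmeas : ∀ x, Measurable (Y x))
    (hnonneg : ∀ x ω, 0 ≤ Y x ω)
    (hindep : iIndepFun Y μ)
    (hident : ∀ x, IdentDistrib (Y x) (Y 0) μ μ)
    (hint : Integrable
      (fun ω => (Y 0 ω / (if Real.exp 1 < Y 0 ω then Real.log (Y 0 ω) else 1)) ^ d) μ) :
    ∀ ε : ℝ, 0 < ε → ∀ᵐ ω ∂μ,
      {x : Fin d → ℤ |
        ¬ Y x ω ≤ ε * Real.sqrt (∑ i, ((x i : ℝ)) ^ 2) *
            Real.log (Real.sqrt (∑ i, ((x i : ℝ)) ^ 2))}.Finite :=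
  iid_field_sublinear_growth_general μ d Y hident hint
end

section
/- Let λ > 0 and let N₁, N₂ be independent Poisson random variables, each with parameter λ. Then for every real x ≥ 0, P[N₁ − N₂ ≥ x] ≤ exp(−2λ · I(x/(2λ))), where I(y) := y·arsinh(y) − √(1+y²) + 1. -/
open MeasureTheory ProbabilityTheory

/-! The moment generating function of `N₁ - N₂` is `t ↦ exp (2λ (cosh t - 1))`, so the Chernoff
bound gives `P[N₁ - N₂ ≥ x] ≤ exp (-t x + 2λ (cosh t - 1))` for every `t ≥ 0`. The exponent is
minimised at `sinh t = y := x / (2λ)`, where `cosh t = √(1 + y²)`. -/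

open Real
open scoped NNReal

namespace ProbabilityTheory

lemma hasSum_poisson_mul_exp_mul (r : ℝ≥0) (t : ℝ) :
    HasSum (fun n : ℕ ↦ exp (-r) * r ^ n / n.factorial * exp (t * n)) (exp (r * (exp t - 1))) := by
  have hexp : HasSum (fun n : ℕ ↦ ((r : ℝ) * exp t) ^ n / n.factorial) (exp (r * exp t)) := by
    rw [exp_eq_exp_ℝ]
    exact NormedSpace.expSeries_div_hasSum_exp _
  have h := hexp.mul_left (exp (-r))
  rw [← exp_add, show -(r : ℝ) + r * exp t = r * (exp t - 1) by ring] at h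
  refine h.congr_fun fun n ↦ ?_
  rw [mul_pow, mul_comm t, exp_nat_mul]
  ring

lemma integrable_exp_mul_poissonMeasure (r : ℝ≥0) (t : ℝ) :
    Integrable (fun n : ℕ ↦ exp (t * n)) (poissonMeasure r) := by
  rw [integrable_poissonMeasure_iff]
  simpa only [norm_of_nonneg (exp_nonneg _)] using (hasSum_poisson_mul_exp_mul r t).summable

lemma mgf_poissonMeasure (r : ℝ≥0) (t : ℝ) :
    mgf (fun n : ℕ ↦ (n : ℝ)) (poissonMeasure r) t = exp (r * (exp t - 1)) := by
  rw [mgf, integral_poissonMeasure]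
  exact (hasSum_poisson_mul_exp_mul r t).tsum_eq

section PoissonVariable

variable {Ω : Type*} [MeasurableSpace Ω] {μ : Measure Ω} {r : ℝ≥0} {N : Ω → ℕ}

lemma integrable_exp_mul_of_map_eq_poissonMeasure (hN : Measurable N)
    (hd : μ.map N = poissonMeasure r) (t : ℝ) :
    Integrable (fun ω ↦ exp (t * N ω)) μ := by
  have h := integrable_exp_mul_poissonMeasure r t
  rw [← hd] at h
  exact (integrable_map_measure measurable_from_top.aestronglyMeasurable hN.aemeasurable).mp h

lemma mgf_of_map_eq_poissonMeasure (hN : Measurable N) (hd : μ.map N = poissonMeasure r)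
    (t : ℝ) : mgf (fun ω ↦ (N ω : ℝ)) μ t = exp (r * (exp t - 1)) := by
  rw [← mgf_poissonMeasure, ← hd, mgf_map hN.aemeasurable]
  · rfl
  · exact measurable_from_top.aestronglyMeasurable

end PoissonVariable

section PoissonDifference

variable {Ω : Type*} [MeasurableSpace Ω] {μ : Measure Ω} {r₁ r₂ : ℝ≥0} {N₁ N₂ : Ω → ℕ}

lemma IndepFun.natCast_neg_natCast (hindep : IndepFun N₁ N₂ μ) :
    IndepFun (fun ω ↦ (N₁ ω : ℝ)) (-fun ω ↦ (N₂ ω : ℝ)) μ :=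
  hindep.comp (φ := fun n : ℕ ↦ (n : ℝ)) (ψ := fun n : ℕ ↦ -(n : ℝ))
    measurable_from_top measurable_from_top

lemma mgf_natCast_sub_of_poisson (h₁ : Measurable N₁) (h₂ : Measurable N₂)
    (hindep : IndepFun N₁ N₂ μ) (hd₁ : μ.map N₁ = poissonMeasure r₁)
    (hd₂ : μ.map N₂ = poissonMeasure r₂) (t : ℝ) :
    mgf (fun ω ↦ (N₁ ω : ℝ) - N₂ ω) μ t =
      exp (r₁ * (exp t - 1) + r₂ * (exp (-t) - 1)) := by
  rw [show (fun ω ↦ (N₁ ω : ℝ) - N₂ ω) = (fun ω ↦ (N₁ ω : ℝ)) + -fun ω ↦ (N₂ ω : ℝ) from rfl,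
    hindep.natCast_neg_natCast.mgf_add' (measurable_from_top.comp h₁).aestronglyMeasurable
      (measurable_from_top.comp h₂).neg.aestronglyMeasurable, mgf_neg,
    mgf_of_map_eq_poissonMeasure h₁ hd₁, mgf_of_map_eq_poissonMeasure h₂ hd₂, exp_add]

lemma measureReal_natCast_sub_ge_le_of_poisson [IsFiniteMeasure μ] (h₁ : Measurable N₁)
    (h₂ : Measurable N₂) (hindep : IndepFun N₁ N₂ μ) (hd₁ : μ.map N₁ = poissonMeasure r₁)
    (hd₂ : μ.map N₂ = poissonMeasure r₂) {t : ℝ} (ht : 0 ≤ t) (x : ℝ) :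
    μ.real {ω | x ≤ (N₁ ω : ℝ) - N₂ ω} ≤
      exp (-t * x + (r₁ * (exp t - 1) + r₂ * (exp (-t) - 1))) := by
  have hint : Integrable (fun ω ↦ exp (t * ((N₁ ω : ℝ) - N₂ ω))) μ := by
    have h₂' := integrable_exp_mul_of_map_eq_poissonMeasure h₂ hd₂ (-t)
    simp only [neg_mul, ← mul_neg] at h₂'
    exact hindep.natCast_neg_natCast.integrable_exp_mul_add
      (integrable_exp_mul_of_map_eq_poissonMeasure h₁ hd₁ t) h₂'
  rw [exp_add, ← mgf_natCast_sub_of_poisson h₁ h₂ hindep hd₁ hd₂]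
  exact measure_ge_le_exp_mul_mgf x ht hint

end PoissonDifference

end ProbabilityTheory

lemma neg_mul_add_cosh_sub_one_at_arsinh (a x : ℝ) (ha : a ≠ 0) :
    -arsinh (x / a) * x + a * (cosh (arsinh (x / a)) - 1) =
      -a * (x / a * arsinh (x / a) - √(1 + (x / a) ^ 2) + 1) := by
  rw [cosh_arsinh]
  field_simp
  ring

/-- Chernoff bound for the difference of two independent Poisson(λ) random variables:
`P[N₁ − N₂ ≥ x] ≤ exp(−2λ I(x/(2λ)))` for `x ≥ 0`, where
`I(y) = y arsinh y − √(1+y²) + 1`. -/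
theorem poisson_difference_tail_bound {Ω : Type*} [MeasurableSpace Ω]
    (μ : Measure Ω) [IsProbabilityMeasure μ]
    (lam : NNReal) (hlam : 0 < lam)
    (N₁ N₂ : Ω → ℕ) (h₁ : Measurable N₁) (h₂ : Measurable N₂)
    (hindep : IndepFun N₁ N₂ μ)
    (hd₁ : μ.map N₁ = poissonMeasure lam)
    (hd₂ : μ.map N₂ = poissonMeasure lam) :
    ∀ x : ℝ, 0 ≤ x →
      (μ {ω | x ≤ (N₁ ω : ℝ) - (N₂ ω : ℝ)}).toReal ≤
        Real.exp (-(2 * lam) *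
          (let y := x / (2 * lam);
            y * Real.arsinh y - Real.sqrt (1 + y ^ 2) + 1)) := by
  intro x hx
  have h2lam : (0 : ℝ) < 2 * lam := by positivity
  set t := arsinh (x / (2 * lam))
  have ht : 0 ≤ t := arsinh_nonneg_iff.mpr (by positivity)
  calc (μ {ω | x ≤ (N₁ ω : ℝ) - N₂ ω}).toReal
      ≤ exp (-t * x + (lam * (exp t - 1) + lam * (exp (-t) - 1))) :=
        measureReal_natCast_sub_ge_le_of_poisson h₁ h₂ hindep hd₁ hd₂ ht x
    _ = exp (-t * x + 2 * lam * (cosh t - 1)) := by rw [cosh_eq]; ring_nf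
    _ = _ := by rw [neg_mul_add_cosh_sub_one_at_arsinh _ _ h2lam.ne']
end

section
/- Let H : [0,∞) → ℝ be convex with H(0) = 0, and suppose there exists θ > 0 such that lim_{t→∞} (H((1+2θ)t) − 2·H((1+θ)t) + H(t))/t = ∞. Then lim_{t→∞} H(t)/t = ∞. -/
/-!
Write `s(t)` for the slope of `H` on `[(1+θ)t, (1+2θ)t]`. The second difference in the hypothesis,
divided by `θt`, is `s(t)` minus the slope on `[t, (1+θ)t]`, and by convexity the latter is at least
the slope on `[0, 1]` once `t ≥ 1`; hence `s(t) → ∞`. Convexity then pushes any slope `M` attained on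
some chord `[x, y]` to every chord `[y, u]`, so `H(u) ≥ H(y) + M(u - y)` and
`liminf H(u)/u ≥ M`.
-/

open Filter

section Slope

variable {𝕜 : Type*} [Field 𝕜]

lemma slope_sub_slope_of_sub_eq_sub (f : 𝕜 → 𝕜) {a b c : 𝕜} (h : b - a = c - b) :
    slope f b c - slope f a b = (f c - 2 * f b + f a) / (c - b) := by
  rw [slope_def_field, slope_def_field, h]
  ring

variable [LinearOrder 𝕜] [IsStrictOrderedRing 𝕜] {s : Set 𝕜} {f : 𝕜 → 𝕜}

lemma ConvexOn.slope_le_slope (hf : ConvexOn 𝕜 s f) {x₁ y₁ x₂ y₂ : 𝕜}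
    (hx₁ : x₁ ∈ s) (hy₁ : y₁ ∈ s) (hx₂ : x₂ ∈ s) (hy₂ : y₂ ∈ s)
    (h₁ : x₁ < y₁) (h₂ : x₂ < y₂) (hx : x₁ ≤ x₂) (hy : y₁ ≤ y₂) :
    slope f x₁ y₁ ≤ slope f x₂ y₂ :=
  calc slope f x₁ y₁
      ≤ slope f x₁ y₂ :=
        hf.slope_mono hx₁ ⟨hy₁, h₁.ne'⟩ ⟨hy₂, (h₁.trans_le hy).ne'⟩ hy
    _ = slope f y₂ x₁ := slope_comm f x₁ y₂
    _ ≤ slope f y₂ x₂ :=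
        hf.slope_mono hy₂ ⟨hx₁, (h₁.trans_le hy).ne⟩ ⟨hx₂, h₂.ne⟩ hx
    _ = slope f x₂ y₂ := slope_comm f y₂ x₂

end Slope

lemma ConvexOn.tendsto_div_atTop_of_forall_exists_le_slope {f : ℝ → ℝ} {a : ℝ}
    (hf : ConvexOn ℝ (Set.Ici a) f) (h : ∀ M, ∃ x y, a ≤ x ∧ x < y ∧ M ≤ slope f x y) :
    Tendsto (fun u => f u / u) atTop atTop := by
  refine tendsto_atTop.2 fun M => ?_
  obtain ⟨x, y, hax, hxy, hM⟩ := h (M + 1)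
  filter_upwards [eventually_gt_atTop y, eventually_gt_atTop 0,
    eventually_ge_atTop ((M + 1) * y - f y)] with u hyu hu hu'
  have hslope : M + 1 ≤ (f u - f y) / (u - y) := by
    rw [← slope_def_field]
    exact hM.trans (hf.slope_le_slope hax (hax.trans hxy.le) (hax.trans hxy.le)
      (hax.trans (hxy.trans hyu).le) hxy hyu hxy.le hyu.le)
  rw [le_div_iff₀ (sub_pos.2 hyu)] at hslope
  rw [le_div_iff₀ hu]
  nlinarith

theorem superlinear_of_strong_intermittency_general (H : ℝ → ℝ)
    (hconv : ConvexOn ℝ (Set.Ici 0) H)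
    (θ : ℝ) (hθ : 0 < θ)
    (hlim : Tendsto (fun t : ℝ => (H ((1 + 2 * θ) * t) - 2 * H ((1 + θ) * t) + H t) / t)
      atTop atTop) :
    Tendsto (fun t : ℝ => H t / t) atTop atTop := by
  have hslope : Tendsto (fun t => slope H ((1 + θ) * t) ((1 + 2 * θ) * t)) atTop atTop := by
    refine tendsto_atTop_mono' _ ?_
      (tendsto_atTop_add_const_right _ (slope H 0 1) (hlim.atTop_div_const hθ))
    filter_upwards [eventually_ge_atTop 1] with t ht
    have hcurv := slope_sub_slope_of_sub_eq_sub H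
      (show (1 + θ) * t - t = (1 + 2 * θ) * t - (1 + θ) * t by ring)
    have hbase : slope H 0 1 ≤ slope H t ((1 + θ) * t) :=
      hconv.slope_le_slope (Set.mem_Ici.2 le_rfl) (Set.mem_Ici.2 zero_le_one)
        (Set.mem_Ici.2 (by linarith)) (Set.mem_Ici.2 (by nlinarith))
        zero_lt_one (by nlinarith) (by linarith) (by nlinarith)
    rw [show (1 + 2 * θ) * t - (1 + θ) * t = t * θ by ring, ← div_div] at hcurv
    linarith
  refine hconv.tendsto_div_atTop_of_forall_exists_le_slope fun M => ?_
  obtain ⟨t, hMt, ht⟩ := ((hslope.eventually_ge_atTop M).and (eventually_ge_atTop 1)).exists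
  exact ⟨(1 + θ) * t, (1 + 2 * θ) * t, by positivity, by nlinarith, hMt⟩

/-- If `H` is convex with `H(0) = 0` and, for some `θ > 0`,
`(H((1+2θ)t) − 2H((1+θ)t) + H(t))/t → ∞` (strong intermittency), then `H(t)/t → ∞`. -/
theorem superlinear_of_strong_intermittency (H : ℝ → ℝ)
    (hconv : ConvexOn ℝ (Set.Ici 0) H) (h0 : H 0 = 0)
    (θ : ℝ) (hθ : 0 < θ)
    (hlim : Tendsto (fun t : ℝ => (H ((1 + 2 * θ) * t) - 2 * H ((1 + θ) * t) + H t) / t)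
      atTop atTop) :
    Tendsto (fun t : ℝ => H t / t) atTop atTop :=
  superlinear_of_strong_intermittency_general H hconv θ hθ hlim
end
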